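/- arXiv:2009.01425 — 2 statements merged into one kernel-verified Lean document; each statement's English description precedes it below -/
import Mathlib

section
/- If b₀ + b₁ ≥ 1 and A₀ + A₁ ≤ 2, then the approximants μ_N converge weakly to Lebesgue measure restricted to [0,1); i.e. the ghost measure of f equals λ. -/
open MeasureTheory Filter Topology

/-- The `N`-th approximant to the ghost measure of `f`: the normalised Dirac comb built from
the values of `f` on the fundamental region `[2^N, 2^(N+1))`. -/
noncomputable def ghostApprox (f : ℕ → ℕ) (N : ℕ) : Measure ℝ :=
  (∑ n ∈ Finset.range (2 ^ N), (f (2 ^ N + n) : ENNReal))⁻¹ •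
    ∑ n ∈ Finset.range (2 ^ N), (f (2 ^ N + n) : ENNReal) • Measure.dirac ((n : ℝ) / 2 ^ N)

/-- Weak (vague) convergence of a sequence of finite measures on `ℝ`. -/
def WeakLimit (μs : ℕ → Measure ℝ) (μ : Measure ℝ) : Prop :=
  ∀ g : BoundedContinuousFunction ℝ ℝ,
    Tendsto (fun N => ∫ x, g x ∂(μs N)) atTop (𝓝 (∫ x, g x ∂μ))

/-! Write `blockSum f p M` for the sum of `f` over `[p 2^M, (p+1) 2^M)` and put `s = A₀ + A₁`,
`b = b₀ + b₁`. Pairing `f (2n)` with `f (2n+1)` gives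
`blockSum f p (M+1) = s · blockSum f p M + b 2^M`, so two blocks of level `M` differ by
`s^M (f q - f p)`, whereas `s · blockSum f p M ≥ b M s^M`. For `s ≤ 2` all `2^k` blocks of level `M`
inside `[2^(M+k), 2^(M+k+1))` therefore carry asymptotically the same mass: `μ_N` gives each dyadic
interval of level `k` a mass tending to `2^-k`, as Lebesgue measure does. Uniform continuity of a
test function on `[0,1]` turns this into weak convergence. -/

open Finset

theorem Finset.sum_range_mul_eq_sum_sum {β : Type*} [AddCommMonoid β] (g : ℕ → β) (a c : ℕ) :
    ∑ n ∈ range (a * c), g n = ∑ j ∈ range a, ∑ m ∈ range c, g (j * c + m) := by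
  induction a with
  | zero => simp
  | succ a ih => rw [Nat.succ_mul, sum_range_add, ih, sum_range_succ]

def blockSum (f : ℕ → ℕ) (p M : ℕ) : ℕ := ∑ m ∈ range (2 ^ M), f (p * 2 ^ M + m)

namespace blockSum

theorem one_left (f : ℕ → ℕ) (N : ℕ) :
    blockSum f 1 N = ∑ n ∈ range (2 ^ N), f (2 ^ N + n) := by
  simp [blockSum]

theorem one_right (f : ℕ → ℕ) (q : ℕ) : blockSum f q 1 = f (2 * q) + f (2 * q + 1) := by
  simp [blockSum, sum_range_succ, mul_comm]

theorem add_right (f : ℕ → ℕ) (p M k : ℕ) :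
    blockSum f p (M + k) = ∑ j ∈ range (2 ^ k), blockSum f (p * 2 ^ k + j) M := by
  rw [blockSum, show 2 ^ (M + k) = 2 ^ k * 2 ^ M by ring, sum_range_mul_eq_sum_sum]
  refine sum_congr rfl fun j _ => sum_congr rfl fun m _ => ?_
  congr 1
  ring

variable {f : ℕ → ℕ} {s b : ℕ} (hpair : ∀ n, 1 ≤ n → f (2 * n) + f (2 * n + 1) = s * f n + b)
include hpair

theorem succ_right {p : ℕ} (hp : 1 ≤ p) (M : ℕ) :
    blockSum f p (M + 1) = s * blockSum f p M + b * 2 ^ M := by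
  have hpos : ∀ j, 1 ≤ p * 2 ^ M + j := fun j =>
    le_add_right (Nat.one_le_iff_ne_zero.mpr (by positivity))
  rw [add_comm, add_right]
  simp only [one_right, hpair _ (hpos _)]
  rw [sum_add_distrib, ← mul_sum, sum_const, card_range, smul_eq_mul, blockSum, mul_comm b]

theorem cast_sub_cast_eq_pow_mul {p q : ℕ} (hp : 1 ≤ p) (hq : 1 ≤ q) (M : ℕ) :
    (blockSum f q M : ℝ) - blockSum f p M = s ^ M * ((f q : ℝ) - f p) := by
  induction M with
  | zero => simp [blockSum]
  | succ M ih =>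
    rw [succ_right hpair hq, succ_right hpair hp]
    push_cast
    linear_combination (s : ℝ) * ih

theorem mul_mul_pow_le {p : ℕ} (hp : 1 ≤ p) (hs : s ≤ 2) (M : ℕ) :
    b * M * s ^ M ≤ s * blockSum f p M := by
  induction M with
  | zero => simp
  | succ M ih =>
    have hpow : s ^ M ≤ 2 ^ M := Nat.pow_le_pow_left hs M
    calc b * (M + 1) * s ^ (M + 1) = s * (b * M * s ^ M) + s * (b * s ^ M) := by ring
      _ ≤ s * (s * blockSum f p M) + s * (b * 2 ^ M) := by gcongr
      _ = s * blockSum f p (M + 1) := by rw [succ_right hpair hp]; ring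

theorem one_left_pos (hf1 : 1 ≤ f 1) (hb : 1 ≤ b) (M : ℕ) : 0 < blockSum f 1 M := by
  cases M with
  | zero => simpa [blockSum] using hf1.trans_lt' zero_lt_one
  | succ M =>
    rw [succ_right hpair le_rfl]
    have : 0 < b * 2 ^ M := by positivity
    omega

theorem tendsto_div_one_left (hs : s ≤ 2) (hb : 1 ≤ b) (hf1 : 1 ≤ f 1) {q : ℕ} (hq : 1 ≤ q) :
    Tendsto (fun M => (blockSum f q M : ℝ) / blockSum f 1 M) atTop (𝓝 1) := by
  have hpos : ∀ M, (0 : ℝ) < blockSum f 1 M := fun M => mod_cast one_left_pos hpair hf1 hb M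
  have hsmall : Tendsto (fun M => (s : ℝ) ^ M / blockSum f 1 M) atTop (𝓝 0) := by
    refine squeeze_zero' (Eventually.of_forall fun M => by positivity) ?_
      (tendsto_const_div_atTop_nhds_zero_nat 2)
    filter_upwards [eventually_ge_atTop 1] with M hM
    have hle : (M : ℝ) * s ^ M ≤ 2 * blockSum f 1 M := by
      have := mul_mul_pow_le hpair le_rfl hs M
      have : M * s ^ M ≤ 2 * blockSum f 1 M := by nlinarith
      exact_mod_cast this
    rw [div_le_div_iff₀ (hpos M) (by positivity)]
    linarith
  have hlim := (hsmall.const_mul ((f q : ℝ) - f 1)).const_add 1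
  rw [mul_zero, add_zero] at hlim
  refine hlim.congr fun M => ?_
  have := cast_sub_cast_eq_pow_mul hpair le_rfl hq M
  field_simp [(hpos M).ne']
  linear_combination -this

theorem tendsto_div_one_left_add (hs : s ≤ 2) (hb : 1 ≤ b) (hf1 : 1 ≤ f 1) (k j : ℕ) :
    Tendsto (fun M => (blockSum f (2 ^ k + j) M : ℝ) / blockSum f 1 (M + k)) atTop
      (𝓝 (1 / 2 ^ k)) := by
  have hq : ∀ i, 1 ≤ 2 ^ k + i := fun i => le_add_right Nat.one_le_two_pow
  have hsum := tendsto_finsetSum (range (2 ^ k))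
    fun i _ => tendsto_div_one_left hpair hs hb hf1 (hq i)
  have hlim := (tendsto_div_one_left hpair hs hb hf1 (hq j)).div hsum (by simp)
  simp only [sum_const, card_range, nsmul_eq_mul, mul_one, Nat.cast_pow, Nat.cast_ofNat] at hlim
  refine hlim.congr fun M => ?_
  have hpos : (blockSum f 1 M : ℝ) ≠ 0 := mod_cast (one_left_pos hpair hf1 hb M).ne'
  simp only [add_right f 1 M k, one_mul, Nat.cast_sum]
  rw [Pi.div_apply, ← sum_div, div_div_div_cancel_right₀ hpos]

end blockSum

def dyadicIco (k j : ℕ) : Set ℝ := Set.Ico ((j : ℝ) / 2 ^ k) ((j + 1) / 2 ^ k)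

theorem measurableSet_dyadicIco (k j : ℕ) : MeasurableSet (dyadicIco k j) := measurableSet_Ico

open Function in
theorem pairwise_disjoint_dyadicIco (k : ℕ) : Pairwise (Disjoint on dyadicIco k) := by
  have hmono : Monotone fun j : ℕ => (j : ℝ) / 2 ^ k := fun i j hij => by
    dsimp only
    gcongr
  convert hmono.pairwise_disjoint_on_Ico_succ using 3 with j
  simp [dyadicIco]

theorem dyadicIco_subset_Ico {k j : ℕ} (hj : j < 2 ^ k) : dyadicIco k j ⊆ Set.Ico 0 1 := by
  refine Set.Ico_subset_Ico (by positivity) ?_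
  rw [div_le_one (by positivity)]
  exact_mod_cast hj

theorem biUnion_dyadicIco (k : ℕ) : ⋃ j ∈ Finset.range (2 ^ k), dyadicIco k j = Set.Ico 0 1 := by
  refine subset_antisymm
    (Set.iUnion₂_subset fun j hj => dyadicIco_subset_Ico (mem_range.mp hj)) ?_
  simpa [dyadicIco] using Ico_subset_biUnion_Ico (2 ^ k) fun j : ℕ => (j : ℝ) / 2 ^ k

theorem abs_sub_lt_of_mem_dyadicIco {k j : ℕ} {x : ℝ} (hx : x ∈ dyadicIco k j) :
    |x - j / 2 ^ k| < 1 / 2 ^ k := by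
  obtain ⟨h₁, h₂⟩ := hx
  rw [abs_of_nonneg (sub_nonneg.mpr h₁)]
  rw [add_div] at h₂
  linarith

theorem left_mem_dyadicIco (k j : ℕ) : (j : ℝ) / 2 ^ k ∈ dyadicIco k j :=
  Set.left_mem_Ico.mpr (by gcongr; linarith)

theorem div_two_pow_mem_dyadicIco_iff {n M k j : ℕ} :
    (n : ℝ) / 2 ^ (M + k) ∈ dyadicIco k j ↔ n ∈ Ico (j * 2 ^ M) ((j + 1) * 2 ^ M) := by
  have h : (n : ℝ) / 2 ^ (M + k) = n / 2 ^ M / 2 ^ k := by rw [pow_add, div_div]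
  rw [h, dyadicIco, Set.mem_Ico, div_le_div_iff_of_pos_right (by positivity),
    div_lt_div_iff_of_pos_right (by positivity), le_div_iff₀ (by positivity),
    div_lt_iff₀ (by positivity), mem_Ico]
  norm_cast

theorem exists_abs_sub_le_on_dyadicIco {g : ℝ → ℝ} (hg : ContinuousOn g (Set.Icc 0 1)) {ε : ℝ}
    (hε : 0 < ε) : ∃ k : ℕ, ∀ j < 2 ^ k, ∀ x ∈ dyadicIco k j, |g x - g (j / 2 ^ k)| ≤ ε := by
  obtain ⟨δ, hδ, hgδ⟩ :=
    Metric.uniformContinuousOn_iff.mp (isCompact_Icc.uniformContinuousOn_of_continuous hg) ε hε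
  obtain ⟨k, hk⟩ := exists_pow_lt_of_lt_one hδ (by norm_num : (1 / 2 : ℝ) < 1)
  refine ⟨k, fun j hj x hx => (hgδ x ?_ _ ?_ ?_).le⟩
  · exact Set.Ico_subset_Icc_self (dyadicIco_subset_Ico hj hx)
  · exact Set.Ico_subset_Icc_self (dyadicIco_subset_Ico hj (left_mem_dyadicIco k j))
  · rw [Real.dist_eq]
    exact (abs_sub_lt_of_mem_dyadicIco hx).trans (by simpa [div_pow] using hk)

theorem abs_integral_sub_sum_dyadicIco_le {μ : Measure ℝ} [IsFiniteMeasure μ]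
    (hμ : μ (Set.Ico 0 1)ᶜ = 0) {g : ℝ → ℝ} (hgi : Integrable g μ) {k : ℕ} {ε : ℝ}
    (hg : ∀ j < 2 ^ k, ∀ x ∈ dyadicIco k j, |g x - g (j / 2 ^ k)| ≤ ε) :
    |∫ x, g x ∂μ - ∑ j ∈ range (2 ^ k), μ.real (dyadicIco k j) * g (j / 2 ^ k)| ≤
      ε * μ.real (Set.Ico 0 1) := by
  have hsplit : ∫ x, g x ∂μ = ∑ j ∈ range (2 ^ k), ∫ x in dyadicIco k j, g x ∂μ := by
    have hconc : μ.restrict (Set.Ico 0 1) = μ :=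
      Measure.restrict_eq_self_of_ae_mem (ae_iff.mpr hμ)
    conv_lhs => rw [← hconc, ← biUnion_dyadicIco k]
    rw [integral_biUnion_finset _ (fun j _ => measurableSet_dyadicIco k j)
        (fun i _ j _ hij => pairwise_disjoint_dyadicIco k hij) (fun j _ => hgi.integrableOn)]
  have hpiece : ∀ j ∈ range (2 ^ k),
      |∫ x in dyadicIco k j, g x ∂μ - μ.real (dyadicIco k j) * g (j / 2 ^ k)| ≤
        ε * μ.real (dyadicIco k j) := by
    intro j hj
    rw [← smul_eq_mul, ← setIntegral_const, ← integral_sub hgi.integrableOn (integrable_const _)]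
    exact norm_setIntegral_le_of_norm_le_const (measure_lt_top _ _)
      fun x hx => (Real.norm_eq_abs _).trans_le (hg j (mem_range.mp hj) x hx)
  calc _ = |∑ j ∈ range (2 ^ k),
          (∫ x in dyadicIco k j, g x ∂μ - μ.real (dyadicIco k j) * g (j / 2 ^ k))| := by
        rw [hsplit, sum_sub_distrib]
    _ ≤ ∑ j ∈ range (2 ^ k), ε * μ.real (dyadicIco k j) :=
        (abs_sum_le_sum_abs _ _).trans (sum_le_sum hpiece)
    _ = ε * μ.real (Set.Ico 0 1) := by
        rw [← mul_sum, ← measureReal_biUnion_finset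
          (fun i _ j _ hij => pairwise_disjoint_dyadicIco k hij)
          (fun j _ => measurableSet_dyadicIco k j), biUnion_dyadicIco]

theorem weakLimit_of_tendsto_measureReal_dyadicIco {μs : ℕ → Measure ℝ} {μ : Measure ℝ}
    [∀ N, IsProbabilityMeasure (μs N)] [IsProbabilityMeasure μ]
    (hμs : ∀ N, μs N (Set.Ico 0 1)ᶜ = 0) (hμ : μ (Set.Ico 0 1)ᶜ = 0)
    (hlim : ∀ k, ∀ j < 2 ^ k,
      Tendsto (fun N => (μs N).real (dyadicIco k j)) atTop (𝓝 (μ.real (dyadicIco k j)))) :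
    WeakLimit μs μ := by
  intro g
  rw [Metric.tendsto_atTop]
  intro ε hε
  obtain ⟨k, hk⟩ :=
    exists_abs_sub_le_on_dyadicIco g.continuous.continuousOn (by positivity : 0 < ε / 3)
  have happrox : ∀ (ν : Measure ℝ) [IsProbabilityMeasure ν], ν (Set.Ico 0 1)ᶜ = 0 →
      |∫ x, g x ∂ν - ∑ j ∈ range (2 ^ k), ν.real (dyadicIco k j) * g (j / 2 ^ k)| ≤ ε / 3 :=
    fun ν _ hν => (abs_integral_sub_sum_dyadicIco_le hν (g.integrable ν) hk).trans
      (mul_le_of_le_one_right (by positivity) measureReal_le_one)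
  have hsum : Tendsto (fun N => ∑ j ∈ range (2 ^ k), (μs N).real (dyadicIco k j) * g (j / 2 ^ k))
      atTop (𝓝 (∑ j ∈ range (2 ^ k), μ.real (dyadicIco k j) * g (j / 2 ^ k))) :=
    tendsto_finsetSum _ fun j hj => (hlim k j (mem_range.mp hj)).mul_const _
  obtain ⟨N₀, hN₀⟩ := Metric.tendsto_atTop.mp hsum (ε / 3) (by positivity)
  refine ⟨N₀, fun N hN => ?_⟩
  obtain ⟨h₁, h₁'⟩ := abs_le.mp (happrox (μs N) (hμs N))
  obtain ⟨h₂, h₂'⟩ := abs_le.mp (happrox μ hμ)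
  obtain ⟨h₃, h₃'⟩ := abs_lt.mp (Real.dist_eq _ _ ▸ hN₀ N hN)
  rw [Real.dist_eq, abs_lt]
  constructor <;> linarith

theorem ghostApprox_apply (f : ℕ → ℕ) (N : ℕ) {t : Set ℝ} [DecidablePred (· ∈ t)]
    (ht : MeasurableSet t) :
    ghostApprox f N t = ((∑ n ∈ range (2 ^ N), f (2 ^ N + n) : ℕ) : ENNReal)⁻¹ *
      ((∑ n ∈ range (2 ^ N) with ((n : ℕ) : ℝ) / 2 ^ N ∈ t, f (2 ^ N + n) : ℕ) : ENNReal) := by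
  simp [ghostApprox, Measure.dirac_apply' _ ht, sum_filter, Set.indicator_apply]

theorem ghostApprox_compl_Ico (f : ℕ → ℕ) (N : ℕ) : ghostApprox f N (Set.Ico 0 1)ᶜ = 0 := by
  have hmem : ∀ n ∈ range (2 ^ N), (n : ℝ) / 2 ^ N ∈ Set.Ico 0 1 := fun n hn =>
    ⟨by positivity, (div_lt_one (by positivity)).mpr (mod_cast mem_range.mp hn)⟩
  rw [ghostApprox_apply f N measurableSet_Ico.compl,
    filter_false_of_mem fun n hn h => h (hmem n hn), sum_empty, Nat.cast_zero, mul_zero]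

theorem isProbabilityMeasure_ghostApprox {f : ℕ → ℕ} {N : ℕ}
    (h : ∑ n ∈ range (2 ^ N), f (2 ^ N + n) ≠ 0) : IsProbabilityMeasure (ghostApprox f N) := by
  constructor
  simp only [ghostApprox_apply f N MeasurableSet.univ, Set.mem_univ, filter_true]
  exact ENNReal.inv_mul_cancel (by exact_mod_cast h) (ENNReal.natCast_ne_top _)

open scoped Classical in
theorem ghostApprox_real_dyadicIco (f : ℕ → ℕ) {M k j : ℕ} (hj : j < 2 ^ k) :
    (ghostApprox f (M + k)).real (dyadicIco k j) =
      blockSum f (2 ^ k + j) M / blockSum f 1 (M + k) := by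
  have hfilter : {n ∈ range (2 ^ (M + k)) | ((n : ℕ) : ℝ) / 2 ^ (M + k) ∈ dyadicIco k j} =
      Ico (j * 2 ^ M) ((j + 1) * 2 ^ M) := by
    have hle : (j + 1) * 2 ^ M ≤ 2 ^ (M + k) := by
      rw [pow_add, mul_comm (2 ^ M)]
      exact Nat.mul_le_mul_right _ hj
    ext n
    simp only [mem_filter, mem_range, div_two_pow_mem_dyadicIco_iff, mem_Ico]
    omega
  have hblock : ∑ n ∈ Ico (j * 2 ^ M) ((j + 1) * 2 ^ M), f (2 ^ (M + k) + n) =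
      blockSum f (2 ^ k + j) M := by
    rw [sum_Ico_eq_sum_range, show (j + 1) * 2 ^ M - j * 2 ^ M = 2 ^ M by rw [add_mul, one_mul,
      Nat.add_sub_cancel_left], blockSum]
    refine sum_congr rfl fun m _ => congrArg f ?_
    ring
  rw [measureReal_def, ghostApprox_apply _ _ (measurableSet_dyadicIco k j), hfilter, hblock,
    ← blockSum.one_left, ENNReal.toReal_mul, ENNReal.toReal_inv, ENNReal.toReal_natCast,
    ENNReal.toReal_natCast, div_eq_inv_mul]

theorem volume_restrict_Ico_real_dyadicIco {k j : ℕ} (hj : j < 2 ^ k) :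
    (volume.restrict (Set.Ico (0 : ℝ) 1)).real (dyadicIco k j) = 1 / 2 ^ k := by
  rw [measureReal_restrict_apply (measurableSet_dyadicIco k j),
    Set.inter_eq_left.mpr (dyadicIco_subset_Ico hj), dyadicIco, Real.volume_real_Ico_of_le
      (by gcongr; linarith)]
  ring

theorem stmt_5_general (A₀ A₁ b₀ b₁ : ℕ)
    (f : ℕ → ℕ) (hf1 : 1 ≤ f 1)
    (heven : ∀ n, 1 ≤ n → f (2 * n) = A₀ * f n + b₀)
    (hodd : ∀ n, 1 ≤ n → f (2 * n + 1) = A₁ * f n + b₁)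
    (hb : 1 ≤ b₀ + b₁) (hA : A₀ + A₁ ≤ 2) :
    WeakLimit (ghostApprox f) (volume.restrict (Set.Ico (0:ℝ) 1)) := by
  have hpair : ∀ n, 1 ≤ n → f (2 * n) + f (2 * n + 1) = (A₀ + A₁) * f n + (b₀ + b₁) :=
    fun n hn => by rw [heven n hn, hodd n hn]; ring
  have : ∀ N, IsProbabilityMeasure (ghostApprox f N) := fun N =>
    isProbabilityMeasure_ghostApprox
      (blockSum.one_left f N ▸ (blockSum.one_left_pos hpair hf1 hb N).ne')
  have : IsProbabilityMeasure (volume.restrict (Set.Ico (0 : ℝ) 1)) := ⟨by simp⟩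
  refine weakLimit_of_tendsto_measureReal_dyadicIco (ghostApprox_compl_Ico f)
    (by simp) fun k j hj => ?_
  rw [volume_restrict_Ico_real_dyadicIco hj, ← tendsto_add_atTop_iff_nat k]
  simp only [ghostApprox_real_dyadicIco f hj]
  exact blockSum.tendsto_div_one_left_add hpair hA hb hf1 k j

theorem stmt_5 (A₀ A₁ b₀ b₁ : ℕ) (hnz : ¬(A₀ = 0 ∧ A₁ = 0 ∧ b₀ = 0 ∧ b₁ = 0))
    (f : ℕ → ℕ) (hf1 : 1 ≤ f 1)
    (heven : ∀ n, 1 ≤ n → f (2 * n) = A₀ * f n + b₀)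
    (hodd : ∀ n, 1 ≤ n → f (2 * n + 1) = A₁ * f n + b₁)
    (hb : 1 ≤ b₀ + b₁) (hA : A₀ + A₁ ≤ 2) :
    WeakLimit (ghostApprox f) (volume.restrict (Set.Ico (0:ℝ) 1)) :=
  stmt_5_general A₀ A₁ b₀ b₁ f hf1 heven hodd hb hA
end

section
/- Suppose b₀ + b₁ ≥ 1 and A₀ = A₁ = A > 1, and let μ be the ghost measure of f (the weak limit of the μ_N). Then for every Borel set E ⊆ [0,1), μ(E) = ∫_E g(x) dλ(x), where g(x) = (f(1) + Σ_{j=1}^∞ b_{d_j(x)} / A^j) / (f(1) + (b₀ + b₁)/(2A − 2)) and d_j(x) = ⌊2^j x⌋ mod 2 is the j-th binary digit of x. -/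
open MeasureTheory Filter Topology

/-!
For `x ∈ [0,1)` the recursion unrolls along the binary digits of `x`:
`f (2^N + ⌊2^N x⌋) = A^N (f 1 + ∑_{j<N} b_{d_{j+1}(x)} / A^(j+1))`, while summing the recursion
over a block gives `Σ(N) = (2A)^N (f 1 + ∑_{j<N} ((b₀ + b₁)/2) / A^(j+1))`. Hence `∫ h dμ_N` is
the Lebesgue integral over `[0,1)` of `2^N f (2^N + ⌊2^N x⌋) / Σ(N) · h (⌊2^N x⌋ / 2^N)`, whose
first factor is the ratio of the two partial sums and converges boundedly to the density `g`.
Dominated convergence gives `μ_N → g λ` weakly, and weak limits of finite measures are unique.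
-/

open scoped BoundedContinuousFunction

theorem Finset.sum_range_two_mul {M : Type*} [AddCommMonoid M] (F : ℕ → M) (m : ℕ) :
    ∑ n ∈ Finset.range (2 * m), F n = ∑ k ∈ Finset.range m, (F (2 * k) + F (2 * k + 1)) := by
  induction m with
  | zero => simp
  | succ m ih =>
    rw [Nat.mul_succ, Finset.sum_range_succ, Finset.sum_range_succ, ih, Finset.sum_range_succ,
      add_assoc]

theorem mem_Ico_div_iff_floor_mul_eq {m : ℕ} (hm : 0 < m) (n : ℕ) (x : ℝ) :
    x ∈ Set.Ico ((n : ℝ) / m) ((n + 1) / m) ↔ 0 ≤ x ∧ ⌊(m : ℝ) * x⌋₊ = n := by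
  have hm' : (0 : ℝ) < m := by exact_mod_cast hm
  rw [Set.mem_Ico, div_le_iff₀ hm', lt_div_iff₀ hm', mul_comm x]
  constructor
  · rintro ⟨hlo, hhi⟩
    have hx : 0 ≤ (m : ℝ) * x := (Nat.cast_nonneg n).trans hlo
    exact ⟨nonneg_of_mul_nonneg_right hx hm', (Nat.floor_eq_iff hx).2 ⟨hlo, hhi⟩⟩
  · rintro ⟨hx, hfloor⟩
    exact (Nat.floor_eq_iff (by positivity)).1 hfloor

theorem setIntegral_Ico_comp_floor_mul (F : ℕ → ℝ) {m : ℕ} (hm : 0 < m) :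
    ∫ x in Set.Ico (0 : ℝ) 1, F ⌊(m : ℝ) * x⌋₊ = (∑ n ∈ Finset.range m, F n) / m := by
  have hm' : (0 : ℝ) < m := by exact_mod_cast hm
  let piece (n : ℕ) : Set ℝ := Set.Ico ((n : ℝ) / m) ((n + 1) / m)
  have hpiece (n : ℕ) (x : ℝ) := mem_Ico_div_iff_floor_mul_eq hm n x
  have hcover : Set.Ico (0 : ℝ) 1 = ⋃ n ∈ Finset.range m, piece n := by
    ext x
    simp only [Set.mem_iUnion, piece, hpiece, Finset.mem_range, exists_prop, Set.mem_Ico]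
    constructor
    · rintro ⟨hx0, hx1⟩
      exact ⟨_, (Nat.floor_lt (by positivity)).2 (by nlinarith), hx0, rfl⟩
    · rintro ⟨_, hlt, hx0, rfl⟩
      have := (Nat.floor_lt (by positivity)).1 hlt
      exact ⟨hx0, by nlinarith⟩
  have hconst (n : ℕ) : ∀ x ∈ piece n, F ⌊(m : ℝ) * x⌋₊ = F n := fun x hx => by
    rw [((hpiece n x).1 hx).2]
  have hdisj : Set.Pairwise (↑(Finset.range m)) (Function.onFun Disjoint piece) :=
    fun i _ j _ hij => Set.disjoint_left.2 fun x hi hj =>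
      hij (((hpiece i x).1 hi).2.symm.trans ((hpiece j x).1 hj).2)
  rw [hcover, integral_biUnion_finset _ (fun _ _ => measurableSet_Ico) hdisj
    fun n _ => (integrableOn_const measure_Ico_lt_top.ne).congr_fun
      (fun x hx => (hconst n x hx).symm) measurableSet_Ico, Finset.sum_div]
  refine Finset.sum_congr rfl fun n _ => ?_
  rw [setIntegral_congr_fun measurableSet_Ico (hconst n), setIntegral_const,
    Real.volume_real_Ico_of_le (by gcongr; linarith), smul_eq_mul]
  field_simp
  ring

theorem tendsto_floor_two_pow_mul_div {x : ℝ} (hx : 0 ≤ x) :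
    Tendsto (fun N : ℕ => (⌊(2 : ℝ) ^ N * x⌋₊ : ℝ) / 2 ^ N) atTop (𝓝 x) := by
  simpa only [Function.comp_def, mul_comm x] using
    (tendsto_nat_floor_mul_div_atTop hx).comp (tendsto_pow_atTop_atTop_of_one_lt one_lt_two)

theorem hasSum_div_pow_succ {A : ℝ} (c : ℝ) (hA : 1 < A) :
    HasSum (fun j : ℕ => c / A ^ (j + 1)) (c / (A - 1)) := by
  have hA₀ : A ≠ 0 := by positivity
  have hA₁ : A - 1 ≠ 0 := sub_ne_zero.2 hA.ne'
  have hgeom := (hasSum_geometric_of_lt_one (inv_nonneg.2 (zero_le_one.trans hA.le))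
    (inv_lt_one_of_one_lt₀ hA)).mul_left (c * A⁻¹)
  have hterm : (fun j : ℕ => c * A⁻¹ * A⁻¹ ^ j) = fun j => c / A ^ (j + 1) := by
    ext j
    rw [inv_pow, pow_succ', div_eq_mul_inv, mul_inv, mul_assoc]
  rwa [hterm, show c * A⁻¹ * (1 - A⁻¹)⁻¹ = c / (A - 1) by field_simp] at hgeom

/-- `digitCoeff b₀ b₁ j x` is `b_{d_{j+1}(x)}`: the index is shifted by one. -/
noncomputable def digitCoeff (b₀ b₁ : ℝ) (j : ℕ) (x : ℝ) : ℝ :=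
  if ⌊(2 : ℝ) ^ (j + 1) * x⌋ % 2 = 0 then b₀ else b₁

noncomputable def digitSum (b₀ b₁ A : ℝ) (N : ℕ) (x : ℝ) : ℝ :=
  ∑ j ∈ Finset.range N, digitCoeff b₀ b₁ j x / A ^ (j + 1)

noncomputable def meanDigitSum (b₀ b₁ A : ℝ) (N : ℕ) : ℝ :=
  ∑ j ∈ Finset.range N, (b₀ + b₁) / 2 / A ^ (j + 1)

noncomputable def ghostDensityApprox (c b₀ b₁ A : ℝ) (N : ℕ) (x : ℝ) : ℝ :=
  (c + digitSum b₀ b₁ A N x) / (c + meanDigitSum b₀ b₁ A N)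

noncomputable def ghostDensity (c b₀ b₁ A : ℝ) (x : ℝ) : ℝ :=
  (c + ∑' j, digitCoeff b₀ b₁ j x / A ^ (j + 1)) / (c + (b₀ + b₁) / (2 * A - 2))

noncomputable def ghostMeasure (c b₀ b₁ A : ℝ) : Measure ℝ :=
  (volume.restrict (Set.Ico 0 1)).withDensity fun x => ENNReal.ofReal (ghostDensity c b₀ b₁ A x)

section GhostDensity

variable {b₀ b₁ A c : ℝ}

theorem digitCoeff_eq_of_nonneg {x : ℝ} (hx : 0 ≤ x) (j : ℕ) :
    digitCoeff b₀ b₁ j x = if ⌊(2 : ℝ) ^ (j + 1) * x⌋₊ % 2 = 0 then b₀ else b₁ := by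
  rw [digitCoeff, ← Int.natCast_floor_eq_floor (by positivity)]
  norm_cast

theorem digitCoeff_nonneg (hb₀ : 0 ≤ b₀) (hb₁ : 0 ≤ b₁) (j : ℕ) (x : ℝ) :
    0 ≤ digitCoeff b₀ b₁ j x := by
  unfold digitCoeff
  split_ifs <;> assumption

theorem digitCoeff_le_max (j : ℕ) (x : ℝ) : digitCoeff b₀ b₁ j x ≤ max b₀ b₁ := by
  unfold digitCoeff
  split_ifs
  exacts [le_max_left _ _, le_max_right _ _]

theorem measurable_digitCoeff (j : ℕ) : Measurable (digitCoeff b₀ b₁ j) :=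
  Measurable.ite (measurableSet_eq_fun
    ((measurable_from_top (f := fun z : ℤ => z % 2)).comp (measurable_const_mul _).floor)
    measurable_const) measurable_const measurable_const

theorem measurable_digitSum (N : ℕ) : Measurable (digitSum b₀ b₁ A N) :=
  Finset.measurable_sum _ fun j _ => (measurable_digitCoeff j).div_const _

theorem summable_digitCoeff_div (hb₀ : 0 ≤ b₀) (hb₁ : 0 ≤ b₁) (hA : 1 < A) (x : ℝ) :
    Summable fun j : ℕ => digitCoeff b₀ b₁ j x / A ^ (j + 1) := by
  have hA₀ : 0 < A := by linarith
  exact (hasSum_div_pow_succ (max b₀ b₁) hA).summable.of_nonneg_of_le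
    (fun j => div_nonneg (digitCoeff_nonneg hb₀ hb₁ j x) (by positivity))
    fun j => div_le_div_of_nonneg_right (digitCoeff_le_max j x) (by positivity)

theorem digitSum_nonneg (hb₀ : 0 ≤ b₀) (hb₁ : 0 ≤ b₁) (hA : 0 < A) (N : ℕ) (x : ℝ) :
    0 ≤ digitSum b₀ b₁ A N x :=
  Finset.sum_nonneg fun j _ => div_nonneg (digitCoeff_nonneg hb₀ hb₁ j x) (by positivity)

theorem digitSum_le (hb₀ : 0 ≤ b₀) (hA : 1 < A) (N : ℕ) (x : ℝ) :
    digitSum b₀ b₁ A N x ≤ max b₀ b₁ / (A - 1) := by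
  have hA₀ : 0 < A := by linarith
  have hmax : 0 ≤ max b₀ b₁ := le_max_of_le_left hb₀
  exact (Finset.sum_le_sum fun j _ =>
    div_le_div_of_nonneg_right (digitCoeff_le_max j x) (by positivity)).trans
    (sum_le_hasSum _ (fun j _ => by positivity) (hasSum_div_pow_succ _ hA))

theorem meanDigitSum_nonneg (hb₀ : 0 ≤ b₀) (hb₁ : 0 ≤ b₁) (hA : 0 < A) (N : ℕ) :
    0 ≤ meanDigitSum b₀ b₁ A N :=
  Finset.sum_nonneg fun j _ => by positivity

theorem tendsto_digitSum (hb₀ : 0 ≤ b₀) (hb₁ : 0 ≤ b₁) (hA : 1 < A) (x : ℝ) :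
    Tendsto (fun N => digitSum b₀ b₁ A N x) atTop
      (𝓝 (∑' j, digitCoeff b₀ b₁ j x / A ^ (j + 1))) :=
  (summable_digitCoeff_div hb₀ hb₁ hA x).hasSum.tendsto_sum_nat

theorem tendsto_meanDigitSum (hA : 1 < A) :
    Tendsto (meanDigitSum b₀ b₁ A) atTop (𝓝 ((b₀ + b₁) / (2 * A - 2))) := by
  have h := (hasSum_div_pow_succ ((b₀ + b₁) / 2) hA).tendsto_sum_nat
  rwa [div_div, mul_sub, mul_one] at h

theorem ghostDensityApprox_nonneg (hc : 0 < c) (hb₀ : 0 ≤ b₀) (hb₁ : 0 ≤ b₁) (hA : 0 < A)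
    (N : ℕ) (x : ℝ) : 0 ≤ ghostDensityApprox c b₀ b₁ A N x :=
  div_nonneg (by linarith [digitSum_nonneg hb₀ hb₁ hA N x])
    (by linarith [meanDigitSum_nonneg hb₀ hb₁ hA N])

theorem ghostDensityApprox_le (hc : 0 < c) (hb₀ : 0 ≤ b₀) (hb₁ : 0 ≤ b₁) (hA : 1 < A)
    (N : ℕ) (x : ℝ) : ghostDensityApprox c b₀ b₁ A N x ≤ (c + max b₀ b₁ / (A - 1)) / c :=
  div_le_div₀ (add_nonneg hc.le (div_nonneg (le_max_of_le_left hb₀) (by linarith)))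
    (by linarith [digitSum_le (b₁ := b₁) hb₀ hA N x]) hc
    (by linarith [meanDigitSum_nonneg hb₀ hb₁ (by linarith) N])

theorem tendsto_ghostDensityApprox (hc : 0 < c) (hb₀ : 0 ≤ b₀) (hb₁ : 0 ≤ b₁) (hA : 1 < A)
    (x : ℝ) :
    Tendsto (ghostDensityApprox c b₀ b₁ A · x) atTop (𝓝 (ghostDensity c b₀ b₁ A x)) := by
  have hmean : 0 ≤ (b₀ + b₁) / (2 * A - 2) := div_nonneg (by linarith) (by linarith)
  exact (tendsto_const_nhds.add (tendsto_digitSum hb₀ hb₁ hA x)).div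
    (tendsto_const_nhds.add (tendsto_meanDigitSum hA)) (by linarith)

theorem ghostDensity_nonneg (hc : 0 < c) (hb₀ : 0 ≤ b₀) (hb₁ : 0 ≤ b₁) (hA : 1 < A) (x : ℝ) :
    0 ≤ ghostDensity c b₀ b₁ A x :=
  ge_of_tendsto' (tendsto_ghostDensityApprox hc hb₀ hb₁ hA x)
    (ghostDensityApprox_nonneg hc hb₀ hb₁ (by linarith) · x)

theorem ghostDensity_le (hc : 0 < c) (hb₀ : 0 ≤ b₀) (hb₁ : 0 ≤ b₁) (hA : 1 < A) (x : ℝ) :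
    ghostDensity c b₀ b₁ A x ≤ (c + max b₀ b₁ / (A - 1)) / c :=
  le_of_tendsto' (tendsto_ghostDensityApprox hc hb₀ hb₁ hA x)
    (ghostDensityApprox_le hc hb₀ hb₁ hA · x)

theorem measurable_ghostDensity (hb₀ : 0 ≤ b₀) (hb₁ : 0 ≤ b₁) (hA : 1 < A) :
    Measurable (ghostDensity c b₀ b₁ A) :=
  ((measurable_of_tendsto_metrizable measurable_digitSum
    (tendsto_pi_nhds.2 (tendsto_digitSum hb₀ hb₁ hA))).const_add c).div_const _

theorem isFiniteMeasure_ghostMeasure (hc : 0 < c) (hb₀ : 0 ≤ b₀) (hb₁ : 0 ≤ b₁) (hA : 1 < A) :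
    IsFiniteMeasure (ghostMeasure c b₀ b₁ A) :=
  isFiniteMeasure_withDensity_ofReal
    (Measure.integrableOn_of_bounded measure_Ico_lt_top.ne
      (measurable_ghostDensity hb₀ hb₁ hA).aestronglyMeasurable
      (Eventually.of_forall fun x => by
        rw [Real.norm_of_nonneg (ghostDensity_nonneg hc hb₀ hb₁ hA x)]
        exact ghostDensity_le hc hb₀ hb₁ hA x)).hasFiniteIntegral

theorem integral_ghostMeasure (hc : 0 < c) (hb₀ : 0 ≤ b₀) (hb₁ : 0 ≤ b₁) (hA : 1 < A)
    (h : ℝ → ℝ) :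
    ∫ x, h x ∂ghostMeasure c b₀ b₁ A = ∫ x in Set.Ico 0 1, ghostDensity c b₀ b₁ A x * h x := by
  rw [ghostMeasure, integral_withDensity_eq_integral_toReal_smul
    (measurable_ghostDensity hb₀ hb₁ hA).ennreal_ofReal
    (Eventually.of_forall fun _ => ENNReal.ofReal_lt_top)]
  simp only [ENNReal.toReal_ofReal (ghostDensity_nonneg hc hb₀ hb₁ hA _), smul_eq_mul]

end GhostDensity

/-- The density of `ghostApprox f N` with each atom `n / 2^N` spread uniformly over
`[n / 2^N, (n + 1) / 2^N)`. -/
noncomputable def blockDensity (f : ℕ → ℕ) (N : ℕ) (x : ℝ) : ℝ :=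
  2 ^ N * f (2 ^ N + ⌊(2 : ℝ) ^ N * x⌋₊) / ∑ n ∈ Finset.range (2 ^ N), (f (2 ^ N + n) : ℝ)

theorem integral_ghostApprox (f : ℕ → ℕ) (N : ℕ) (h : ℝ →ᵇ ℝ) :
    ∫ x, h x ∂ghostApprox f N
      = (∑ n ∈ Finset.range (2 ^ N), (f (2 ^ N + n) : ℝ) * h (n / 2 ^ N)) /
          ∑ n ∈ Finset.range (2 ^ N), (f (2 ^ N + n) : ℝ) := by
  have hmass : (∑ n ∈ Finset.range (2 ^ N), (f (2 ^ N + n) : ENNReal)).toReal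
      = ∑ n ∈ Finset.range (2 ^ N), (f (2 ^ N + n) : ℝ) := by
    rw [ENNReal.toReal_sum fun _ _ => ENNReal.natCast_ne_top _]
    simp
  unfold ghostApprox
  rw [integral_smul_measure, ENNReal.toReal_inv, hmass,
    integral_finsetSum_measure fun _ _ =>
      (h.integrable _).smul_measure (ENNReal.natCast_ne_top _),
    smul_eq_mul, inv_mul_eq_div]
  congr 1
  refine Finset.sum_congr rfl fun n _ => ?_
  rw [integral_smul_measure, integral_dirac]
  simp

theorem integral_ghostApprox_eq_setIntegral_blockDensity (f : ℕ → ℕ) (N : ℕ) (h : ℝ →ᵇ ℝ) :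
    ∫ x, h x ∂ghostApprox f N
      = ∫ x in Set.Ico 0 1, blockDensity f N x * h (⌊(2 : ℝ) ^ N * x⌋₊ / 2 ^ N) := by
  have hstep := setIntegral_Ico_comp_floor_mul (m := 2 ^ N) (fun n => 2 ^ N * f (2 ^ N + n) /
    (∑ n ∈ Finset.range (2 ^ N), (f (2 ^ N + n) : ℝ)) * h (n / 2 ^ N)) (by positivity)
  push_cast at hstep
  simp only [blockDensity]
  rw [hstep, integral_ghostApprox, Finset.sum_div, Finset.sum_div]
  refine Finset.sum_congr rfl fun n _ => ?_
  field_simp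

structure IsAffineTwoRegular (f : ℕ → ℕ) (A b₀ b₁ : ℕ) : Prop where
  apply_two_mul : ∀ n, 1 ≤ n → f (2 * n) = A * f n + b₀
  apply_two_mul_add_one : ∀ n, 1 ≤ n → f (2 * n + 1) = A * f n + b₁

namespace IsAffineTwoRegular

variable {f : ℕ → ℕ} {A b₀ b₁ : ℕ}

theorem apply_two_pow_succ_add (hf : IsAffineTwoRegular f A b₀ b₁) (N k : ℕ) :
    f (2 ^ (N + 1) + k) = A * f (2 ^ N + k / 2) + if k % 2 = 0 then b₀ else b₁ := by
  have hpos : 1 ≤ 2 ^ N + k / 2 := by have := Nat.one_le_two_pow (n := N); omega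
  have hsplit : 2 ^ (N + 1) + k = 2 * (2 ^ N + k / 2) + k % 2 := by rw [pow_succ]; omega
  rcases Nat.mod_two_eq_zero_or_one k with hk | hk
  · rw [if_pos hk, hsplit, hk, add_zero, hf.apply_two_mul _ hpos]
  · rw [if_neg (by omega), hsplit, hk, hf.apply_two_mul_add_one _ hpos]

theorem apply_two_pow_add_floor (hf : IsAffineTwoRegular f A b₀ b₁) (hA : 0 < A) (N : ℕ)
    {x : ℝ} (hx : x ∈ Set.Ico 0 1) :
    (f (2 ^ N + ⌊(2 : ℝ) ^ N * x⌋₊) : ℝ) = A ^ N * (f 1 + digitSum b₀ b₁ A N x) := by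
  induction N with
  | zero => simp [Nat.floor_eq_zero.2 hx.2, digitSum]
  | succ N ih =>
    have hfloor : ⌊(2 : ℝ) ^ N * x⌋₊ = ⌊(2 : ℝ) ^ (N + 1) * x⌋₊ / 2 := by
      rw [← Nat.floor_div_natCast, pow_succ]
      push_cast
      ring_nf
    have hA' : (A : ℝ) ≠ 0 := by positivity
    rw [hf.apply_two_pow_succ_add, digitSum, Finset.sum_range_succ, ← digitSum,
      digitCoeff_eq_of_nonneg hx.1, ← hfloor]
    push_cast
    rw [ih]
    field_simp
    ring

theorem sum_apply_two_pow_succ_add (hf : IsAffineTwoRegular f A b₀ b₁) (N : ℕ) :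
    ∑ n ∈ Finset.range (2 ^ (N + 1)), f (2 ^ (N + 1) + n)
      = 2 * A * ∑ n ∈ Finset.range (2 ^ N), f (2 ^ N + n) + 2 ^ N * (b₀ + b₁) := by
  have hpair (n : ℕ) : f (2 ^ (N + 1) + 2 * n) + f (2 ^ (N + 1) + (2 * n + 1))
      = 2 * A * f (2 ^ N + n) + (b₀ + b₁) := by
    rw [hf.apply_two_pow_succ_add, hf.apply_two_pow_succ_add, show 2 * n / 2 = n by omega,
      show (2 * n + 1) / 2 = n by omega, if_pos (by omega), if_neg (by omega)]
    ring
  rw [pow_succ', Finset.sum_range_two_mul, ← pow_succ']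
  simp only [hpair, Finset.sum_add_distrib, Finset.sum_const, Finset.card_range, smul_eq_mul,
    Finset.mul_sum, mul_add]

theorem sum_apply_two_pow_add (hf : IsAffineTwoRegular f A b₀ b₁) (hA : 0 < A) (N : ℕ) :
    ∑ n ∈ Finset.range (2 ^ N), (f (2 ^ N + n) : ℝ)
      = (2 * A) ^ N * (f 1 + meanDigitSum b₀ b₁ A N) := by
  induction N with
  | zero => simp [meanDigitSum]
  | succ N ih =>
    have hA' : (A : ℝ) ≠ 0 := by positivity
    rw [← Nat.cast_sum, hf.sum_apply_two_pow_succ_add, meanDigitSum, Finset.sum_range_succ,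
      ← meanDigitSum]
    push_cast
    rw [ih]
    field_simp
    ring

theorem blockDensity_eq_ghostDensityApprox (hf : IsAffineTwoRegular f A b₀ b₁) (hA : 0 < A)
    (N : ℕ) {x : ℝ} (hx : x ∈ Set.Ico 0 1) :
    blockDensity f N x = ghostDensityApprox (f 1) b₀ b₁ A N x := by
  rw [blockDensity, hf.apply_two_pow_add_floor hA N hx, hf.sum_apply_two_pow_add hA N, mul_pow,
    ← mul_assoc, mul_div_mul_left _ _ (by positivity), ghostDensityApprox]

theorem tendsto_integral_ghostApprox (hf : IsAffineTwoRegular f A b₀ b₁) (hA : 1 < A)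
    (hf1 : 0 < f 1) (h : ℝ →ᵇ ℝ) :
    Tendsto (fun N => ∫ x, h x ∂ghostApprox f N) atTop
      (𝓝 (∫ x in Set.Ico 0 1, ghostDensity (f 1) b₀ b₁ A x * h x)) := by
  have hc : (0 : ℝ) < f 1 := by exact_mod_cast hf1
  have hA' : (1 : ℝ) < A := by exact_mod_cast hA
  have hb₀ : (0 : ℝ) ≤ b₀ := Nat.cast_nonneg _
  have hb₁ : (0 : ℝ) ≤ b₁ := Nat.cast_nonneg _
  simp only [integral_ghostApprox_eq_setIntegral_blockDensity]
  refine tendsto_integral_of_dominated_convergence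
    (fun _ => (f 1 + max (b₀ : ℝ) b₁ / (A - 1)) / f 1 * ‖h‖) (fun N => ?_)
    (integrableOn_const measure_Ico_lt_top.ne) (fun N => ?_) ?_
  · refine Measurable.aestronglyMeasurable ?_
    unfold blockDensity
    fun_prop (disch := exact measurable_from_nat)
  · filter_upwards [ae_restrict_mem measurableSet_Ico] with x hx
    rw [norm_mul, hf.blockDensity_eq_ghostDensityApprox (by omega) N hx, Real.norm_of_nonneg
      (ghostDensityApprox_nonneg hc hb₀ hb₁ (by linarith) N x)]
    exact mul_le_mul (ghostDensityApprox_le hc hb₀ hb₁ hA' N x) (h.norm_coe_le_norm _)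
      (norm_nonneg _) ((ghostDensityApprox_nonneg hc hb₀ hb₁ (by linarith) N x).trans
        (ghostDensityApprox_le hc hb₀ hb₁ hA' N x))
  · filter_upwards [ae_restrict_mem measurableSet_Ico] with x hx
    refine Tendsto.mul ?_ ((h.continuous.tendsto x).comp (tendsto_floor_two_pow_mul_div hx.1))
    simpa only [hf.blockDensity_eq_ghostDensityApprox (by omega) _ hx] using
      tendsto_ghostDensityApprox hc hb₀ hb₁ hA' x

theorem weakLimit_ghostApprox (hf : IsAffineTwoRegular f A b₀ b₁) (hA : 1 < A) (hf1 : 0 < f 1) :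
    WeakLimit (ghostApprox f) (ghostMeasure (f 1) b₀ b₁ A) := fun h => by
  rw [integral_ghostMeasure (by exact_mod_cast hf1) (Nat.cast_nonneg _) (Nat.cast_nonneg _)
    (by exact_mod_cast hA)]
  exact hf.tendsto_integral_ghostApprox hA hf1 h

end IsAffineTwoRegular

theorem WeakLimit.unique {μs : ℕ → Measure ℝ} {μ ν : Measure ℝ} [IsFiniteMeasure μ]
    [IsFiniteMeasure ν] (hμ : WeakLimit μs μ) (hν : WeakLimit μs ν) : μ = ν :=
  ext_of_forall_integral_eq_of_IsFiniteMeasure fun h => tendsto_nhds_unique (hμ h) (hν h)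

theorem stmt_7_general (A₀ A₁ b₀ b₁ : ℕ)
    (f : ℕ → ℕ) (hf1 : 1 ≤ f 1)
    (heven : ∀ n, 1 ≤ n → f (2 * n) = A₀ * f n + b₀)
    (hodd : ∀ n, 1 ≤ n → f (2 * n + 1) = A₁ * f n + b₁)
    (hA : A₀ = A₁) (hA1 : 1 < A₀)
    (μ : Measure ℝ) (hμ : IsProbabilityMeasure μ)
    (hlim : WeakLimit (ghostApprox f) μ) :
    ∀ E : Set ℝ, MeasurableSet E → E ⊆ Set.Ico (0:ℝ) 1 →
      μ E = ∫⁻ x in E,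
        ENNReal.ofReal
          (((f 1 : ℝ) + ∑' j : ℕ,
              (if ⌊(2:ℝ) ^ (j + 1) * x⌋ % 2 = 0 then (b₀ : ℝ) else (b₁ : ℝ)) /
                (A₀ : ℝ) ^ (j + 1)) /
            ((f 1 : ℝ) + ((b₀ : ℝ) + b₁) / (2 * A₀ - 2))) := by
  intro E hE hEsub
  subst hA
  have hf : IsAffineTwoRegular f A₀ b₀ b₁ := ⟨heven, hodd⟩
  have := isFiniteMeasure_ghostMeasure (c := f 1) (b₀ := b₀) (b₁ := b₁) (A := A₀)
    (by exact_mod_cast hf1) (Nat.cast_nonneg _) (Nat.cast_nonneg _) (by exact_mod_cast hA1)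
  rw [hlim.unique (hf.weakLimit_ghostApprox hA1 hf1), ghostMeasure, withDensity_apply _ hE,
    Measure.restrict_restrict hE, Set.inter_eq_self_of_subset_left hEsub]
  rfl

theorem stmt_7 (A₀ A₁ b₀ b₁ : ℕ) (hnz : ¬(A₀ = 0 ∧ A₁ = 0 ∧ b₀ = 0 ∧ b₁ = 0))
    (f : ℕ → ℕ) (hf1 : 1 ≤ f 1)
    (heven : ∀ n, 1 ≤ n → f (2 * n) = A₀ * f n + b₀)
    (hodd : ∀ n, 1 ≤ n → f (2 * n + 1) = A₁ * f n + b₁)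
    (hb : 1 ≤ b₀ + b₁) (hA : A₀ = A₁) (hA1 : 1 < A₀)
    (μ : Measure ℝ) (hμ : IsProbabilityMeasure μ)
    (hlim : WeakLimit (ghostApprox f) μ) :
    ∀ E : Set ℝ, MeasurableSet E → E ⊆ Set.Ico (0:ℝ) 1 →
      μ E = ∫⁻ x in E,
        ENNReal.ofReal
          (((f 1 : ℝ) + ∑' j : ℕ,
              (if ⌊(2:ℝ) ^ (j + 1) * x⌋ % 2 = 0 then (b₀ : ℝ) else (b₁ : ℝ)) /
                (A₀ : ℝ) ^ (j + 1)) /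
            ((f 1 : ℝ) + ((b₀ : ℝ) + b₁) / (2 * A₀ - 2))) :=
  stmt_7_general A₀ A₁ b₀ b₁ f hf1 heven hodd hA hA1 μ hμ hlim
end
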